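/- arXiv:2002.06853 — 11 statements merged into one kernel-verified Lean document; each statement's English description precedes it below -/
import Mathlib

section
/- Let G be a group and define on the set M(G,2) = G × {0,1} the operation (g,0)*(h,0)=(gh,0), (g,0)*(h,1)=(hg,1), (g,1)*(h,0)=(gh⁻¹,1), (g,1)*(h,1)=(h⁻¹g,0). Then M(G,2) with this operation is a loop: it has identity (1,0), and for all a,b the equations a*x=b and y*a=b have unique solutions. -/
/-- The Chein loop multiplication on `M(G,2) = G × Bool`,
where `(g, false)` represents `g` and `(g, true)` represents `gu`. -/
def cmul {G : Type*} [Group G] : G × Bool → G × Bool → G × Bool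
  | (g, false), (h, false) => (g * h, false)
  | (g, false), (h, true)  => (h * g, true)
  | (g, true),  (h, false) => (g * h⁻¹, true)
  | (g, true),  (h, true)  => (h⁻¹ * g, false)

lemma cmul_left_cancel {G : Type*} [Group G] (a x x' : G × Bool)
    (h : cmul a x = cmul a x') : x = x' := by
  rcases a with ⟨a, _ | _⟩ <;> rcases x with ⟨x, _ | _⟩ <;> rcases x' with ⟨x', _ | _⟩ <;>
    simp_all [cmul, Prod.ext_iff]

lemma cmul_right_cancel {G : Type*} [Group G] (a y y' : G × Bool)
    (h : cmul y a = cmul y' a) : y = y' := by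
  rcases a with ⟨a, _ | _⟩ <;> rcases y with ⟨y, _ | _⟩ <;> rcases y' with ⟨y', _ | _⟩ <;>
    simp_all [cmul, Prod.ext_iff]

/-- `M(G,2)` is a loop: `(1, false)` is a two-sided identity and all left and
right translation equations have unique solutions. -/
theorem chein_is_loop {G : Type*} [Group G] :
    (∀ a : G × Bool, cmul ((1 : G), false) a = a ∧ cmul a ((1 : G), false) = a) ∧
    (∀ a b : G × Bool, (∃! x, cmul a x = b) ∧ (∃! y, cmul y a = b)) := by
  refine ⟨fun a => ?_, fun a b => ⟨?_, ?_⟩⟩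
  · rcases a with ⟨a, _ | _⟩ <;> simp [cmul]
  · have hx : ∃ x, cmul a x = b := by
      rcases a with ⟨a, _ | _⟩ <;> rcases b with ⟨b, _ | _⟩
      · exact ⟨(a⁻¹ * b, false), by simp [cmul]⟩
      · exact ⟨(b * a⁻¹, true), by simp [cmul]⟩
      · exact ⟨(a * b⁻¹, true), by simp [cmul]⟩
      · exact ⟨(b⁻¹ * a, false), by simp [cmul]⟩
    obtain ⟨x, hx⟩ := hx
    exact ⟨x, hx, fun x' hx' => cmul_left_cancel a x' x (hx'.trans hx.symm)⟩
  · have hy : ∃ y, cmul y a = b := by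
      rcases a with ⟨a, _ | _⟩ <;> rcases b with ⟨b, _ | _⟩
      · exact ⟨(b * a⁻¹, false), by simp [cmul]⟩
      · exact ⟨(b * a, true), by simp [cmul]⟩
      · exact ⟨(a * b, true), by simp [cmul]⟩
      · exact ⟨(a⁻¹ * b, false), by simp [cmul]⟩
    obtain ⟨y, hy⟩ := hy
    exact ⟨y, hy, fun y' hy' => cmul_right_cancel a y' y (hy'.trans hy.symm)⟩
end

section
/- The Chein loop M(G,2) satisfies the Moufang identity x*(y*(x*z)) = ((x*y)*x)*z for all x,y,z. -/
/-- `M(G,2)` satisfies the Moufang identity. -/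
theorem chein_moufang {G : Type*} [Group G] :
    ∀ x y z : G × Bool, cmul x (cmul y (cmul x z)) = cmul (cmul (cmul x y) x) z := by
  rintro ⟨a, (_|_)⟩ ⟨b, (_|_)⟩ ⟨c, (_|_)⟩ <;> simp [cmul, mul_assoc]
end

section
/- The Chein loop M(G,2) is associative (i.e., (a*b)*c = a*(b*c) for all a,b,c) if and only if the group G is abelian. -/
/-- `M(G,2)` is associative if and only if `G` is abelian. -/
theorem chein_assoc_iff_comm {G : Type*} [Group G] :
    (∀ a b c : G × Bool, cmul (cmul a b) c = cmul a (cmul b c)) ↔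
      (∀ g h : G, g * h = h * g) := by
  constructor
  · intro h g k
    have := h (g, false) (k, false) (1, true)
    simp [cmul] at this
    exact this
  · intro hc a b c
    letI : CommGroup G := { mul_comm := hc }
    obtain ⟨g, _ | _⟩ := a <;> obtain ⟨h, _ | _⟩ := b <;> obtain ⟨k, _ | _⟩ := c <;>
      simp only [cmul, mul_inv_rev, inv_inv, Prod.mk.injEq, and_true] <;> ac_rfl
end

section
/- For each t ∈ G, the map d_t : M(G,2) → M(G,2) defined by d_t(g,0) = (g,0) and d_t(g,1) = (tg,1) is an automorphism of the Chein loop M(G,2). -/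
/-- The map `d_t` on `M(G,2)`. -/
def dMap {G : Type*} [Group G] (t : G) : G × Bool → G × Bool
  | (g, false) => (g, false)
  | (g, true)  => (t * g, true)

/-- For each `t ∈ G`, the map `d_t` is an automorphism of the Chein loop `M(G,2)`. -/
theorem chein_dMap_aut {G : Type*} [Group G] (t : G) :
    Function.Bijective (dMap t) ∧
      ∀ x y : G × Bool, dMap t (cmul x y) = cmul (dMap t x) (dMap t y) := by
  constructor
  · apply Function.bijective_iff_has_inverse.mpr
    refine ⟨dMap t⁻¹, ?_, ?_⟩ <;> rintro ⟨g, _ | _⟩ <;> simp [dMap]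
  · rintro ⟨g, _ | _⟩ ⟨h, _ | _⟩ <;> simp [dMap, cmul, mul_assoc]
end

section
/- Let f be a half-automorphism of the Chein loop L = M(G,2) fixing the identity-component and u, i.e., f(g,0)=(g,0) for all g∈G and f(1,1)=(1,1). Then for every g∈G, f(g,1) ∈ {(g,1),(g⁻¹,1)}. -/
/-- A half-automorphism of the Chein loop `M(G,2)`. -/
def IsHalfAut {G : Type*} [Group G] (f : G × Bool → G × Bool) : Prop :=
  Function.Bijective f ∧
    ∀ x y, f (cmul x y) = cmul (f x) (f y) ∨ f (cmul x y) = cmul (f y) (f x)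

/-- A half-automorphism of `M(G,2)` fixing `G` pointwise and fixing `u` sends
each `gu` to either `gu` or `g⁻¹u`. -/
theorem half_aut_fixing_image {G : Type*} [Group G] (f : G × Bool → G × Bool)
    (hf : IsHalfAut f) (h0 : ∀ g : G, f (g, false) = (g, false))
    (hu : f ((1 : G), true) = ((1 : G), true)) :
    ∀ g : G, f (g, true) = (g, true) ∨ f (g, true) = (g⁻¹, true) := by
  intro g
  rcases hb : f (g, true) with ⟨k, b⟩
  cases b with
  | false =>
    exfalso
    have hinj : ((k : G), false) = (g, true) := by
      apply hf.1.1
      rw [h0 k, hb]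
    simp at hinj
  | true =>
    have h1 := hf.2 (g, true) (1, true)
    simp only [cmul, inv_one, one_mul, mul_one, hb, hu, h0] at h1
    rcases h1 with h1 | h1
    · left
      rw [((Prod.mk.injEq _ _ _ _).mp h1.symm).1]
    · right
      rw [← ((Prod.mk.injEq _ _ _ _).mp h1.symm).1, inv_inv]
end

section
/- Let G be a nonabelian group and let H be the set of half-automorphisms f of L = M(G,2) such that f(g,0)=(g,0) for all g∈G and f(1,1)=(1,1). Then every element of H other than the identity is neither an automorphism nor an anti-automorphism of L. -/
/-- If `G` is nonabelian, every non-identity half-automorphism of `M(G,2)` that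
fixes `G` pointwise and fixes `u` is neither an automorphism nor an
anti-automorphism. -/
theorem H_nonidentity_nontrivial {G : Type*} [Group G]
    (hnab : ∃ a b : G, a * b ≠ b * a)
    (f : G × Bool → G × Bool) (hf : IsHalfAut f)
    (h0 : ∀ g : G, f (g, false) = (g, false))
    (hu : f ((1 : G), true) = ((1 : G), true))
    (hne : f ≠ id) :
    (¬ ∀ x y : G × Bool, f (cmul x y) = cmul (f x) (f y)) ∧
    (¬ ∀ x y : G × Bool, f (cmul x y) = cmul (f y) (f x)) := by
  constructor
  · intro haut
    apply hne
    funext x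
    obtain ⟨g, b⟩ := x
    cases b
    · simpa using h0 g
    · have h1 : cmul (g, false) ((1 : G), true) = (g, true) := by
        simp [cmul]
      have := haut (g, false) ((1 : G), true)
      rw [h1, h0 g, hu] at this
      simpa [cmul] using this
  · intro hanti
    obtain ⟨a, b, hab⟩ := hnab
    have := hanti (a, false) (b, false)
    rw [h0 a, h0 b] at this
    simp only [cmul, h0] at this
    exact hab (Prod.mk.injEq .. ▸ this).1
end

section
/- Let φ be a half-automorphism of L = M(G,2) fixing G pointwise and fixing u, and suppose x,g∈G with φ(x,1)=(x⁻¹,1), x⁻¹ ≠ x, and φ(g,1)=(g,1). Then g⁻¹ = x⁻¹gx and (xg)² = x². -/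
/-- If a half-automorphism `φ` of `M(G,2)` fixing `G` pointwise and fixing `u`
inverts `xu` (with `x⁻¹ ≠ x`) and fixes `gu`, then `g⁻¹ = x⁻¹ g x` and
`(xg)² = x²`. -/
theorem H_inverted_vs_fixed {G : Type*} [Group G]
    (φ : G × Bool → G × Bool) (hφ : IsHalfAut φ)
    (h0 : ∀ h : G, φ (h, false) = (h, false))
    (hu : φ ((1 : G), true) = ((1 : G), true))
    (x g : G) (hx : φ (x, true) = (x⁻¹, true)) (hx2 : x⁻¹ ≠ x)
    (hg : φ (g, true) = (g, true)) :
    g⁻¹ = x⁻¹ * g * x ∧ (x * g) ^ 2 = x ^ 2 := by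
  have h2 := hφ.2 (g, true) (x, true)
  simp only [cmul, h0, hx, hg, Prod.mk.injEq, and_true] at h2
  rcases h2 with h2 | h2
  · exact absurd ((mul_right_cancel h2).trans (inv_inv x)) hx2
  · have hgi : g⁻¹ = x⁻¹ * g * x := by
      have : x⁻¹ * g * x = g⁻¹ := by rw [h2]; group
      exact this.symm
    refine ⟨hgi, ?_⟩
    have hgx : g * x = x * g⁻¹ := by rw [hgi]; group
    rw [pow_two, pow_two, mul_assoc, ← mul_assoc g x g, hgx]
    group
end

section
/- Let φ be a half-automorphism of L = M(G,2) fixing G pointwise and fixing u, and let x∈G with φ(x,1)=(x⁻¹,1) and x² ≠ 1. Then x² lies in the center of G. -/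
/-- If a half-automorphism `φ` of `M(G,2)` fixing `G` pointwise and fixing `u`
inverts `xu` with `x² ≠ 1`, then `x²` is central in `G`. -/
theorem H_square_central {G : Type*} [Group G]
    (φ : G × Bool → G × Bool) (hφ : IsHalfAut φ)
    (h0 : ∀ h : G, φ (h, false) = (h, false))
    (hu : φ ((1 : G), true) = ((1 : G), true))
    (x : G) (hx : φ (x, true) = (x⁻¹, true)) (hx2 : x ^ 2 ≠ 1) :
    x ^ 2 ∈ Subgroup.center G := by
  rw [Subgroup.mem_center_iff]
  intro g
  -- Step 1: φ (g, true) is (g, true) or (g⁻¹, true)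
  have hg : φ (g, true) = (g, true) ∨ φ (g, true) = (g⁻¹, true) := by
    have h := hφ.2 (g, false) (1, true)
    rw [h0, hu] at h
    simp only [cmul, one_mul, inv_one] at h
    rcases h with h | h
    · left; exact h
    · right; exact h
  -- Step 2: apply half-aut to (g,u)*(x,u) = (x⁻¹ g, 1)
  have key := hφ.2 (g, true) (x, true)
  simp only [cmul] at key
  rw [h0, hx] at key
  rcases hg with hg | hg <;> rw [hg] at key <;> simp only [cmul, inv_inv] at key <;>
    rcases key with h | h <;>
    rw [Prod.mk.injEq] at h <;>
    obtain ⟨h, -⟩ := h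
  · -- x⁻¹ * g = x * g, i.e. x⁻¹ = x, contradiction
    exfalso
    apply hx2
    have hxx : x⁻¹ = x := mul_right_cancel h
    rw [sq]
    exact mul_eq_one_iff_inv_eq.mpr hxx
  · -- x⁻¹ * g = g⁻¹ * x⁻¹ : then g x g = x, so x² commutes with g
    have e2 : g⁻¹ * x = x * g := by
      have := congrArg (·⁻¹) h
      simpa [mul_inv_rev] using this
    have e1 : g * x = x * g⁻¹ := by
      have := congrArg (fun z => g * z * g⁻¹) e2
      simp only [mul_assoc, mul_inv_cancel_left, mul_inv_cancel, mul_one,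
        inv_mul_cancel_left] at this
      exact this.symm
    rw [sq]
    calc g * (x * x) = (g * x) * x := by rw [mul_assoc]
      _ = (x * g⁻¹) * x := by rw [e1]
      _ = x * (g⁻¹ * x) := by rw [mul_assoc]
      _ = x * (x * g) := by rw [e2]
      _ = x * x * g := by rw [mul_assoc]
  · -- x⁻¹ * g = x * g⁻¹ : then x² = g²
    have h2 : g * g = x * x := by
      have := congrArg (fun z => x * z * g) h
      simpa [mul_assoc] using this
    rw [sq, ← h2]
    group
  · -- x⁻¹ * g = g * x⁻¹ : x and g commute
    have hc : g * x = x * g := by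
      have := congrArg (fun z => x * z * x) h
      simpa [mul_assoc] using this
    rw [sq]
    calc g * (x * x) = (g * x) * x := by rw [mul_assoc]
      _ = (x * g) * x := by rw [hc]
      _ = x * (g * x) := by rw [mul_assoc]
      _ = x * (x * g) := by rw [hc]
      _ = x * x * g := by rw [mul_assoc]
end

section
/- Let φ be a nontrivial half-automorphism of L = M(G,2) fixing G pointwise and fixing u, with nonempty set γ_φ = {x∈G : φ(x,1)=(x⁻¹,1), o(x)=4}. If g,h ∈ G ∖ γ_φ satisfy φ(g,1)=(g,1), φ(h,1)=(h,1), and hg ∈ γ_φ, then g has order 4. -/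
/-- If `g, h ∉ γ_φ` are fixed on the `u`-component by a nontrivial
half-automorphism `φ` (fixing `G` pointwise and fixing `u`), and `hg ∈ γ_φ`,
then `g` has order `4`. -/
theorem product_in_gamma_order_four {G : Type*} [Group G]
    (φ : G × Bool → G × Bool) (hφ : IsHalfAut φ)
    (h0 : ∀ a : G, φ (a, false) = (a, false))
    (hu : φ ((1 : G), true) = ((1 : G), true))
    (hnt : (¬ ∀ x y : G × Bool, φ (cmul x y) = cmul (φ x) (φ y)) ∧
           (¬ ∀ x y : G × Bool, φ (cmul x y) = cmul (φ y) (φ x)))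
    (hne : {x : G | φ (x, true) = (x⁻¹, true) ∧ orderOf x = 4}.Nonempty)
    (g h : G)
    (hgγ : g ∉ {x : G | φ (x, true) = (x⁻¹, true) ∧ orderOf x = 4})
    (hhγ : h ∉ {x : G | φ (x, true) = (x⁻¹, true) ∧ orderOf x = 4})
    (hgfix : φ (g, true) = (g, true)) (hhfix : φ (h, true) = (h, true))
    (hhg : h * g ∈ {x : G | φ (x, true) = (x⁻¹, true) ∧ orderOf x = 4}) :
    orderOf g = 4 := by
  obtain ⟨hfix4, hord4⟩ := hhg
  have key := hφ.2 (g, false) (h, true)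
  have hc : cmul (g, false) (h, true) = (h * g, true) := rfl
  have hc2 : cmul (h, true) (g, false) = (h * g⁻¹, true) := rfl
  rw [hc, hfix4, h0, hhfix, hc2, hc] at key
  rcases key with key | key
  · -- (h*g)⁻¹ = h*g, contradiction with order 4
    have h1 : (h * g)⁻¹ = h * g := (Prod.mk.injEq _ _ _ _ ▸ key).1
    have h2 : (h * g) ^ 2 = 1 := by
      rw [pow_two]; nth_rewrite 1 [← h1]; exact inv_mul_cancel _
    have := orderOf_dvd_of_pow_eq_one h2
    rw [hord4] at this
    omega
  · -- (h*g)⁻¹ = h*g⁻¹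
    have h1 : (h * g)⁻¹ = h * g⁻¹ := (Prod.mk.injEq _ _ _ _ ▸ key).1
    have e1 : h⁻¹ = g * h * g⁻¹ := by
      have : g⁻¹ * h⁻¹ = h * g⁻¹ := by rw [← mul_inv_rev, h1]
      calc h⁻¹ = g * (g⁻¹ * h⁻¹) := by group
        _ = g * (h * g⁻¹) := by rw [this]
        _ = g * h * g⁻¹ := by group
    have key2 : (h * g) * (h * g) = g * g := by
      calc (h * g) * (h * g) = h * (g * h * g⁻¹) * (g * g) := by group
        _ = h * h⁻¹ * (g * g) := by rw [← e1]
        _ = g * g := by group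
    have hg4 : g ^ 4 = 1 := by
      have h4 : (h * g) ^ 4 = 1 := by rw [← hord4]; exact pow_orderOf_eq_one _
      calc g ^ 4 = (g * g) * (g * g) := by simp [pow_succ, mul_assoc]
        _ = ((h * g) * (h * g)) * ((h * g) * (h * g)) := by rw [key2]
        _ = (h * g) ^ 4 := by simp [pow_succ, mul_assoc]
        _ = 1 := h4
    have hg2 : g ^ 2 ≠ 1 := by
      intro hg2
      have : (h * g) ^ 2 = 1 := by
        rw [pow_two, key2, ← pow_two, hg2]
      have := orderOf_dvd_of_pow_eq_one this
      rw [hord4] at this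
      omega
    have hdvd : orderOf g ∣ 4 := orderOf_dvd_of_pow_eq_one hg4
    have hnd : ¬ orderOf g ∣ 2 := fun hd => hg2 (orderOf_dvd_iff_pow_eq_one.mp hd)
    have hle : orderOf g ≤ 4 := Nat.le_of_dvd (by norm_num) hdvd
    have hpos : 0 < orderOf g := Nat.pos_of_ne_zero (by rintro h0'; rw [h0'] at hdvd; omega)
    interval_cases hv : orderOf g <;> omega
end

section
/- Let G be a finite nonabelian group such that M(G,2) admits a nontrivial half-automorphism. Then there exists y ∈ G of order 4 such that whenever y = gh with g,h ∈ G, either g has order 4 or h has order 4. -/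
/-!
The parity `x ↦ (f x).2` of a half-automorphism `f` of `M(G,2)` is a homomorphism onto `ℤ/2`.
Composing `f` with automorphisms of `M(G,2)`, and with the inversion of `M(G,2)` when needed,
we may assume that `f` fixes `G × {0}` pointwise and `(1,1)`. If `f` sends some `(t,0)` to the
odd coset, every element of `G` outside the even subgroup `N` is an involution, so `G` is
generalized dihedral over `N`, and an automorphism of `M(G,2)` exchanging the two `ℤ/2`-coordinates
of `M(N ⋊ ℤ/2, 2)` brings `f` back to `f(G × {0}) = G × {0}`. Then `f` restricts to a
half-automorphism of `G`, which is an automorphism or an anti-automorphism by Scott's theorem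
and can be absorbed.

The normalized `f` is `(g,1) ↦ (D g, 1)` with `D g ∈ {g, g⁻¹}`. If `D x = x⁻¹ ≠ x` and also
`D (x²) ≠ x²`, the relations that the half-automorphism property imposes on `D` force `G` to be
abelian. So every `x` with `D x ≠ x` has order `4`, and if such an `x` factors as `u v` with
`D u = u`, then `v u v⁻¹ = u⁻¹`, whence `v² = x²` and `v` has order `4` as well.
-/

open Function

def IsHalfHom {A B : Type*} [Mul A] [Mul B] (φ : A → B) : Prop :=
  ∀ x y, φ (x * y) = φ x * φ y ∨ φ (x * y) = φ y * φ x

namespace IsHalfHom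

variable {A B : Type*} [Group A] [Group B] {φ : A → B}

theorem map_one (hφ : IsHalfHom φ) : φ 1 = 1 := by
  have h : φ 1 = φ 1 * φ 1 := by simpa using (hφ 1 1).elim id id
  simpa using h.symm

theorem map_inv (hφ : IsHalfHom φ) (x : A) : φ x⁻¹ = (φ x)⁻¹ := by
  rcases hφ x x⁻¹ with h | h <;> rw [mul_inv_cancel, hφ.map_one] at h
  · exact eq_inv_of_mul_eq_one_right h.symm
  · exact eq_inv_of_mul_eq_one_left h.symm

theorem map_mul_self (hφ : IsHalfHom φ) (x : A) : φ (x * x) = φ x * φ x :=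
  (hφ x x).elim id id

theorem commute_of_map_mul (hφ : IsHalfHom φ) {a b : A} (hab : Commute a b)
    (hv : φ (a * b) = φ a * φ b) : Commute (φ a) (φ b) := by
  by_contra hne
  have h₁ : φ (a⁻¹ * b) = (φ a)⁻¹ * φ b := by
    rcases hφ a⁻¹ b with h | h
    · rwa [hφ.map_inv] at h
    · rw [hφ.map_inv] at h
      have h₂ := hφ (a * a) (a⁻¹ * b)
      rw [show a * a * (a⁻¹ * b) = a * b by group, hv, hφ.map_mul_self, h] at h₂
      refine absurd ?_ hne
      rcases h₂ with h₂ | h₂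
      · have : φ b = φ a * φ b * (φ a)⁻¹ := mul_left_cancel (h₂.trans (by group))
        calc φ a * φ b = φ a * φ b * (φ a)⁻¹ * φ a := by group
          _ = φ b * φ a := by rw [← this]
      · exact h₂.trans (by group)
  have h₂ := hφ (b * b) (b⁻¹ * a⁻¹)
  rw [show b * b * (b⁻¹ * a⁻¹) = a⁻¹ * b by rw [hab.inv_left.eq]; group, h₁, hφ.map_mul_self,
    show b⁻¹ * a⁻¹ = (a * b)⁻¹ by group, hφ.map_inv, hv] at h₂
  refine hne (Commute.inv_left_iff.mp ?_)
  rcases h₂ with h₂ | h₂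
  · exact h₂.trans (by group)
  · have h₃ : φ b * (φ a)⁻¹ * φ b = (φ a)⁻¹ * φ b * φ b := by
      conv_lhs => rw [mul_assoc, h₂]
      group
    exact (mul_right_cancel h₃).symm

theorem map_commute (hφ : IsHalfHom φ) {a b : A} (hab : Commute a b) :
    Commute (φ a) (φ b) := by
  rcases hφ a b with h | h
  · exact hφ.commute_of_map_mul hab h
  · rw [hab.eq] at h
    exact (hφ.commute_of_map_mul hab.symm h).symm

theorem inv (hφ : IsHalfHom φ) : IsHalfHom fun x => (φ x)⁻¹ := fun x y => by
  rcases hφ x y with h | h <;> simp [h]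

theorem false_of_map_mul_of_map_mul_rev_of_commute (hφ : IsHalfHom φ) (hinj : Injective φ)
    {a b c : A} (hab : φ (a * b) = φ a * φ b) (hab' : ¬Commute (φ a) (φ b))
    (hac : φ (a * c) = φ c * φ a) (hac' : ¬Commute (φ c) (φ a))
    (hP : Commute (φ c) (φ a * φ b)) : False := by
  by_cases hbc : Commute (φ b) (φ c)
  · refine hac' (mul_right_cancel (b := φ b) ?_)
    rw [mul_assoc, hP.eq, mul_assoc, hbc.eq, mul_assoc]
  have hba : φ (b * a) = φ b * φ a := by
    refine (hφ b a).resolve_right fun h => hab' (hφ.map_commute ?_)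
    exact hinj (hab.trans h.symm)
  have key := hφ b (a * c)
  rw [hac, ← mul_assoc] at key
  rcases key with h | h <;> rcases hφ (b * a) c with h' | h' <;> rw [h, hba] at h'
  · exact hac' (mul_left_cancel (a := φ b) (by simpa only [mul_assoc] using h'))
  · exact hbc (mul_right_cancel (b := φ a) (by simpa only [← mul_assoc] using h'))
  · refine hab' (mul_right_cancel (b := φ c) ?_)
    calc φ a * φ b * φ c = φ c * (φ a * φ b) := hP.eq.symm
      _ = φ b * φ a * φ c := by rw [← mul_assoc]; exact h'
  · exact hab' (mul_left_cancel (a := φ c) (by simpa only [mul_assoc] using h'))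

theorem false_of_map_mul_of_map_mul_rev (hφ : IsHalfHom φ) (hinj : Injective φ) {a b c : A}
    (hab : φ (a * b) = φ a * φ b) (hab' : ¬Commute (φ a) (φ b))
    (hac : φ (a * c) = φ c * φ a) (hac' : ¬Commute (φ c) (φ a)) : False := by
  have key := hφ (a * b) (b⁻¹ * c)
  rw [show a * b * (b⁻¹ * c) = a * c by group, hac, hab] at key
  rcases hφ b⁻¹ c with h | h <;> rw [hφ.map_inv] at h <;> rw [h] at key
  · rcases key with h' | h'
    · exact hac' (h'.trans (by group))
    · -- passing to the half-homomorphism `(φ ·)⁻¹` exchanges the roles of `b` and `c`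
      have hQ : Commute (φ b) (φ c * φ a) := by
        change _ = _
        conv_lhs => rw [h']
        group
      refine hφ.inv.false_of_map_mul_of_map_mul_rev_of_commute
        (fun x y h => hinj (inv_injective h)) (a := a) (b := c) (c := b) ?_ ?_ ?_ ?_ ?_
      · simp [hac]
      · simpa [Commute.inv_inv_iff] using hac'.imp Commute.symm
      · simp [hab]
      · simpa [Commute.inv_inv_iff] using hab'.imp Commute.symm
      · simpa [← mul_inv_rev, Commute.inv_inv_iff] using hQ
  · rcases key with h' | h'
    · refine hφ.false_of_map_mul_of_map_mul_rev_of_commute hinj hab hab' hac hac' ?_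
      change _ = _
      rw [← mul_assoc, h']
      group
    · refine hab' (Eq.symm ?_)
      have : φ a = (φ b)⁻¹ * φ a * φ b := mul_left_cancel (h'.trans (by group))
      calc φ b * φ a = φ b * ((φ b)⁻¹ * φ a * φ b) := by rw [← this]
        _ = φ a * φ b := by group

/-- Scott's theorem. -/
theorem map_mul_or_map_mul_rev (hφ : IsHalfHom φ) (hinj : Injective φ) :
    (∀ x y, φ (x * y) = φ x * φ y) ∨ ∀ x y, φ (x * y) = φ y * φ x := by
  by_contra! ⟨⟨a, b, hab⟩, c, d, hcd⟩
  have hab₁ := (hφ a b).resolve_left hab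
  have hab₂ : ¬Commute (φ b) (φ a) := fun h => hab (hab₁.trans h.eq)
  have hcd₁ := (hφ c d).resolve_right hcd
  have hcd₂ : ¬Commute (φ c) (φ d) := fun h => hcd (hcd₁.trans h.eq)
  have hc : ∀ x, φ (c * x) = φ c * φ x := fun x => by
    by_contra hx
    exact hφ.false_of_map_mul_of_map_mul_rev hinj hcd₁ hcd₂ ((hφ c x).resolve_left hx)
      fun h => hx (((hφ c x).resolve_left hx).trans h.eq)
  have ha : ∀ x, φ (a * x) = φ x * φ a := fun x => by
    by_contra hx
    exact hφ.false_of_map_mul_of_map_mul_rev hinj ((hφ a x).resolve_right hx)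
      (fun h => hx (((hφ a x).resolve_right hx).trans h.eq)) hab₁ hab₂
  have key : ∀ x, Commute (φ x) (φ a) ∨ Commute (φ c) (φ x) := fun x => by
    rcases hφ (c * a) x with h | h <;> rw [mul_assoc, hc, ha, hc] at h
    · exact .inl (mul_left_cancel (h.trans (mul_assoc _ _ _)))
    · exact .inr (mul_right_cancel (b := φ a) (by simpa only [mul_assoc] using h))
  have hcb : Commute (φ c) (φ b) := (key b).resolve_left hab₂
  have hda : Commute (φ d) (φ a) := (key d).resolve_right hcd₂
  rcases hφ d b with h | h <;> rcases key (d * b) with h' | h' <;> rw [h] at h'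
  · exact hab₂ (by simpa using hda.inv_left.mul_left h')
  · exact hcd₂ (by simpa using h'.mul_right hcb.inv_right)
  · exact hab₂ (by simpa using h'.mul_left hda.inv_left)
  · exact hcd₂ (by simpa using hcb.inv_right.mul_right h')

end IsHalfHom

theorem orderOf_eq_four {G : Type*} [Group G] {x : G} (h₂ : x * x ≠ 1)
    (h₄ : x * x * (x * x) = 1) : orderOf x = 4 :=
  orderOf_eq_prime_pow (p := 2) (n := 1) (by rwa [pow_one, sq])
    (by rw [show (2 : ℕ) ^ (1 + 1) = 2 * 2 from rfl, pow_mul, sq, sq]; exact h₄)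

/-- `D` describes the map `(g, 0) ↦ (g, 0)`, `(g, 1) ↦ (D g, 1)` of `M(G,2)`; the fields say that
this map is a half-automorphism fixing `(1, 1)`. -/
structure IsTwist {G : Type*} [Group G] (D : G → G) : Prop where
  injective : Injective D
  map_one : D 1 = 1
  map_mul : ∀ y x, D (y * x) = D y * x ∨ D (y * x) = D y * x⁻¹
  inv_mul : ∀ y x, y⁻¹ * x = (D y)⁻¹ * D x ∨ y⁻¹ * x = (D x)⁻¹ * D y

namespace IsTwist

variable {G : Type*} [Group G] {D : G → G} (hD : IsTwist D)
include hD

theorem eq_or_eq_inv (x : G) : D x = x ∨ D x = x⁻¹ := by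
  simpa [hD.map_one] using hD.map_mul 1 x

theorem eq_inv_of_ne {x : G} (hx : D x ≠ x) : D x = x⁻¹ :=
  (hD.eq_or_eq_inv x).resolve_left hx

theorem mul_self_ne_one {x : G} (hx : D x ≠ x) : x * x ≠ 1 := fun h =>
  hx ((hD.eq_inv_of_ne hx).trans (inv_eq_of_mul_eq_one_right h))

theorem map_mul_self {x : G} (hx : D x ≠ x) : D (x * x) = (x * x)⁻¹ := by
  rcases hD.map_mul x x with h | h <;> rw [hD.eq_inv_of_ne hx] at h
  · exact absurd (hD.injective (h.trans (by simp [hD.map_one]))) (hD.mul_self_ne_one hx)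
  · rw [h, mul_inv_rev]

theorem conj_eq_inv_of_fixed {y k : G} (hy : D y ≠ y) (hk : D k = k) :
    y * k * y⁻¹ = k⁻¹ := by
  rcases hD.inv_mul y k with h | h <;> rw [hD.eq_inv_of_ne hy, hk] at h
  · exact absurd (mul_eq_one_iff_inv_eq.mpr (mul_right_cancel (h.trans (by rw [inv_inv]))))
      (hD.mul_self_ne_one hy)
  · calc y * k * y⁻¹ = (k⁻¹ * y⁻¹)⁻¹ * y⁻¹ := by group
      _ = k⁻¹ := by rw [← h]; group

theorem commute_or_mul_self_eq {x y : G} (hx : D x ≠ x) (hy : D y ≠ y) :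
    Commute x y ∨ x * x = y * y := by
  rcases hD.inv_mul y x with h | h <;>
    rw [hD.eq_inv_of_ne hx, hD.eq_inv_of_ne hy, inv_inv] at h
  · right
    calc x * x = y * (y⁻¹ * x) * x := by group
      _ = y * y := by rw [h]; group
  · left
    calc x * y = y * (y⁻¹ * x) * y := by group
      _ = y * x := by rw [h]; group

theorem conj_eq_inv_of_mul {x y : G} (hy : D y = y) (hyx : D (y * x) ≠ y * x) :
    x * y * x⁻¹ = y⁻¹ := by
  rcases hD.map_mul y x with h | h <;> rw [hD.eq_inv_of_ne hyx, hy] at h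
  · exact absurd (mul_eq_one_iff_inv_eq.mpr h) (hD.mul_self_ne_one hyx)
  · calc x * y * x⁻¹ = x * (y * x⁻¹) := by group
      _ = y⁻¹ := by rw [← h]; group

theorem mul_self_eq_of_mul_fixed {x y : G} (hy : D y ≠ y) (hyx : D (y * x) = y * x) :
    y * y = x⁻¹ * x⁻¹ := by
  rcases hD.map_mul y x with h | h <;> rw [hyx, hD.eq_inv_of_ne hy] at h
  · exact absurd (mul_eq_one_iff_inv_eq.mpr (mul_right_cancel h).symm) (hD.mul_self_ne_one hy)
  · calc y * y = y * (y * x) * x⁻¹ := by group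
      _ = x⁻¹ * x⁻¹ := by rw [h]; group

theorem commute_or_conj_eq_inv {x y : G} (hy : D y ≠ y) (hyx : D (y * x) ≠ y * x) :
    Commute x y ∨ y * x * y⁻¹ = x⁻¹ := by
  rcases hD.map_mul y x with h | h <;>
    rw [hD.eq_inv_of_ne hyx, hD.eq_inv_of_ne hy, mul_inv_rev] at h
  · right
    calc y * x * y⁻¹ = (y * (x⁻¹ * y⁻¹))⁻¹ := by group
      _ = x⁻¹ := by rw [h]; group
  · left
    calc x * y = (y⁻¹ * x⁻¹)⁻¹ := by group
      _ = y * x := by rw [← h]; group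

theorem mul_self_mul_self_eq_one_of_not_commute {p q : G} (hp : D p ≠ p) (hq : D q ≠ q)
    (hpq : ¬Commute p q) : q * q * (q * q) = 1 := by
  have hsq := (hD.commute_or_mul_self_eq hp hq).resolve_left hpq
  by_cases hmul : D (p * q) = p * q
  · calc q * q * (q * q) = q * q * (p * p) := by rw [hsq]
      _ = 1 := by rw [hD.mul_self_eq_of_mul_fixed hp hmul]; group
  · have h := (hD.commute_or_conj_eq_inv hp hmul).resolve_left fun h => hpq h.symm
    have : q⁻¹ * q⁻¹ = q * q :=
      calc q⁻¹ * q⁻¹ = p * (q * q) * p⁻¹ := by rw [← h]; group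
        _ = q * q := by rw [← hsq]; group
    calc q * q * (q * q) = q * q * (q⁻¹ * q⁻¹) := by rw [this]
      _ = 1 := by group

section

variable {x : G} (hx : D x ≠ x) (hx2 : D (x * x) ≠ x * x)
include hx hx2

theorem mul_self_eq_one_of_fixed {k : G} (hk : D k = k) : k * k = 1 := by
  have h₁ := hD.conj_eq_inv_of_fixed hx hk
  have h₂ := hD.conj_eq_inv_of_fixed hx2 hk
  have : k⁻¹ = k :=
    calc k⁻¹ = x * (x * k * x⁻¹) * x⁻¹ := by rw [← h₂]; group
      _ = x * k⁻¹ * x⁻¹ := by rw [h₁]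
      _ = (x * k * x⁻¹)⁻¹ := by group
      _ = k := by rw [h₁, inv_inv]
  exact mul_eq_one_iff_inv_eq.mpr this

theorem commute_of_fixed {a : G} (ha : D a = a) (b : G) : Commute a b := by
  have ha' : a⁻¹ = a := inv_eq_of_mul_eq_one_right (hD.mul_self_eq_one_of_fixed hx hx2 ha)
  by_cases hb : D b = b
  · by_cases hab : D (a * b) = a * b
    · have := inv_eq_of_mul_eq_one_right (hD.mul_self_eq_one_of_fixed hx hx2 hab)
      rwa [mul_inv_rev, ha', inv_eq_of_mul_eq_one_right (hD.mul_self_eq_one_of_fixed hx hx2 hb),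
        eq_comm] at this
    · have := hD.conj_eq_inv_of_mul ha hab
      rw [ha'] at this
      exact (mul_inv_eq_iff_eq_mul.mp this).symm
  · have := hD.conj_eq_inv_of_fixed hb ha
    rw [ha'] at this
    exact (mul_inv_eq_iff_eq_mul.mp this).symm

theorem commute_of_ne {a b : G} (ha : D a ≠ a) (hb : D b ≠ b) : Commute a b := by
  have hxz : ∀ z, D z ≠ z → Commute x z := fun z hz => by
    by_contra hxz
    refine hx2 ?_
    rw [hD.map_mul_self hx, (hD.commute_or_mul_self_eq hx hz).resolve_left hxz,
      inv_eq_of_mul_eq_one_right (hD.mul_self_mul_self_eq_one_of_not_commute hx hz hxz)]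
  by_contra hab
  have hxab : ¬Commute (x * a) b := fun h => hab (by simpa using (hxz b hb).inv_left.mul_left h)
  by_cases hxa : D (x * a) = x * a
  · exact hxab (hD.commute_of_fixed hx hx2 hxa b)
  · have h₁ := (hD.commute_or_mul_self_eq hxa hb).resolve_left hxab
    have h₂ := (hD.commute_or_mul_self_eq ha hb).resolve_left hab
    refine hD.mul_self_ne_one hx (mul_right_cancel (b := a * a) ?_)
    calc x * x * (a * a) = x * a * (x * a) := by rw [(hxz a ha).mul_mul_mul_comm]
      _ = 1 * (a * a) := by rw [h₁, ← h₂, one_mul]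

theorem commute (a b : G) : Commute a b := by
  by_cases ha : D a = a
  · exact hD.commute_of_fixed hx hx2 ha b
  by_cases hb : D b = b
  · exact (hD.commute_of_fixed hx hx2 hb a).symm
  exact hD.commute_of_ne hx hx2 ha hb

end

variable (hG : ∃ a b : G, a * b ≠ b * a)
include hG

theorem mul_self_mul_self_eq_one {x : G} (hx : D x ≠ x) : x * x * (x * x) = 1 := by
  obtain ⟨a, b, hab⟩ := hG
  by_contra h
  refine hab (hD.commute hx ?_ a b)
  rw [hD.map_mul_self hx]
  exact fun h' => h (mul_eq_one_iff_inv_eq.mpr h')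

theorem orderOf_eq_four_of_ne {x : G} (hx : D x ≠ x) : orderOf x = 4 :=
  orderOf_eq_four (hD.mul_self_ne_one hx) (hD.mul_self_mul_self_eq_one hG hx)

theorem orderOf_eq_four_of_ne_of_eq_mul {w u v : G} (hw : D w ≠ w) (huv : w = u * v) :
    orderOf u = 4 ∨ orderOf v = 4 := by
  by_cases hu : D u = u
  · subst huv
    have h := hD.conj_eq_inv_of_mul hu hw
    have hsq : u * v * (u * v) = v * v :=
      calc u * v * (u * v) = u * (v * u * v⁻¹) * (v * v) := by group
        _ = v * v := by rw [h]; group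
    right
    refine orderOf_eq_four ?_ ?_ <;> rw [← hsq]
    · exact hD.mul_self_ne_one hw
    · exact hD.mul_self_mul_self_eq_one hG hw
  · exact .inl (hD.orderOf_eq_four_of_ne hG hu)

end IsTwist

section

variable {G : Type*} [Group G]

theorem snd_cmul (x y : G × Bool) : (cmul x y).2 = xor x.2 y.2 := by
  rcases x with ⟨g, _ | _⟩ <;> rcases y with ⟨h, _ | _⟩ <;> rfl

def IsLoopHom (f : G × Bool → G × Bool) : Prop := ∀ x y, f (cmul x y) = cmul (f x) (f y)

def IsLoopAntiHom (f : G × Bool → G × Bool) : Prop := ∀ x y, f (cmul x y) = cmul (f y) (f x)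

def IsNontrivialHalfAut (f : G × Bool → G × Bool) : Prop :=
  IsHalfAut f ∧ ¬IsLoopHom f ∧ ¬IsLoopAntiHom f

namespace IsNontrivialHalfAut

variable {f ψ : G × Bool → G × Bool} (hf : IsNontrivialHalfAut f)
include hf

theorem comp_of_isLoopHom (hψ : IsLoopHom ψ) (hψb : Bijective ψ) :
    IsNontrivialHalfAut (f ∘ ψ) := by
  obtain ⟨⟨hfb, hf⟩, hhom, hanti⟩ := hf
  refine ⟨⟨hfb.comp hψb, fun x y => by simpa only [comp_apply, hψ x y] using hf (ψ x) (ψ y)⟩,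
    fun h => hhom fun x y => ?_, fun h => hanti fun x y => ?_⟩ <;>
  obtain ⟨x, rfl⟩ := hψb.2 x <;> obtain ⟨y, rfl⟩ := hψb.2 y <;>
  simpa only [comp_apply, hψ x y] using h x y

theorem comp_of_isLoopAntiHom (hψ : IsLoopAntiHom ψ) (hψb : Bijective ψ) :
    IsNontrivialHalfAut (f ∘ ψ) := by
  obtain ⟨⟨hfb, hf⟩, hhom, hanti⟩ := hf
  refine ⟨⟨hfb.comp hψb, fun x y => by
      simpa only [comp_apply, hψ x y] using (hf (ψ y) (ψ x)).symm⟩,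
    fun h => hanti fun x y => ?_, fun h => hhom fun x y => ?_⟩ <;>
  obtain ⟨x, rfl⟩ := hψb.2 x <;> obtain ⟨y, rfl⟩ := hψb.2 y <;>
  simpa only [comp_apply, hψ y x] using h y x

theorem isLoopHom_comp (hψ : IsLoopHom ψ) (hψb : Bijective ψ) :
    IsNontrivialHalfAut (ψ ∘ f) := by
  obtain ⟨⟨hfb, hf⟩, hhom, hanti⟩ := hf
  refine ⟨⟨hψb.comp hfb, fun x y => ?_⟩, fun h => hhom fun x y => hψb.1 ?_,
    fun h => hanti fun x y => hψb.1 ?_⟩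
  · rcases hf x y with h | h
    · exact .inl ((congrArg ψ h).trans (hψ _ _))
    · exact .inr ((congrArg ψ h).trans (hψ _ _))
  all_goals exact (h x y).trans (hψ _ _).symm

end IsNontrivialHalfAut

def liftAut (α : G ≃* G) (c : G) : G × Bool → G × Bool
  | (g, false) => (α g, false)
  | (g, true) => (c * α g, true)

theorem isLoopHom_liftAut (α : G ≃* G) (c : G) : IsLoopHom (liftAut α c) := by
  rintro ⟨g, _ | _⟩ ⟨h, _ | _⟩ <;> simp [liftAut, cmul, mul_assoc]

theorem bijective_liftAut (α : G ≃* G) (c : G) : Bijective (liftAut α c) := by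
  refine ⟨?_, ?_⟩
  · rintro ⟨g, _ | _⟩ ⟨h, _ | _⟩ <;> simp [liftAut]
  · rintro ⟨g, _ | _⟩
    · exact ⟨(α.symm g, false), by simp [liftAut]⟩
    · exact ⟨(α.symm (c⁻¹ * g), true), by simp [liftAut]⟩

def loopInv : G × Bool → G × Bool
  | (g, false) => (g⁻¹, false)
  | (g, true) => (g, true)

theorem isLoopAntiHom_loopInv : IsLoopAntiHom (loopInv (G := G)) := by
  rintro ⟨g, _ | _⟩ ⟨h, _ | _⟩ <;> simp [loopInv, cmul]

theorem involutive_loopInv : Involutive (loopInv (G := G)) := by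
  rintro ⟨g, _ | _⟩ <;> simp [loopInv]

structure IsGeneralizedDihedral (N : Subgroup G) : Prop where
  index_eq_two : N.index = 2
  mul_self_eq_one : ∀ g ∉ N, g * g = 1

namespace IsGeneralizedDihedral

variable {N : Subgroup G} (hN : IsGeneralizedDihedral N)
include hN

theorem inv_eq_self {s : G} (hs : s ∉ N) : s⁻¹ = s :=
  inv_eq_of_mul_eq_one_right (hN.mul_self_eq_one s hs)

theorem mul_mem_iff {a b : G} : a * b ∈ N ↔ (a ∈ N ↔ b ∈ N) :=
  Subgroup.mul_mem_iff_of_index_two hN.index_eq_two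

theorem mul_eq_inv_mul {s n : G} (hs : s ∉ N) (hn : n ∈ N) : s * n = n⁻¹ * s := by
  have hsn : s * n ∉ N := by simp [hN.mul_mem_iff, hs, hn]
  rw [← hN.inv_eq_self hsn, mul_inv_rev, hN.inv_eq_self hs]

theorem commute {n m : G} (hn : n ∈ N) (hm : m ∈ N) : Commute n m := by
  obtain ⟨s, hs, -⟩ := Subgroup.index_eq_two_iff_exists_notMem_and.mp hN.index_eq_two
  have h := hN.mul_eq_inv_mul hs (N.mul_mem hn hm)
  rw [← mul_assoc, hN.mul_eq_inv_mul hs hn, mul_assoc, hN.mul_eq_inv_mul hs hm, ← mul_assoc,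
    mul_left_inj, mul_inv_rev] at h
  exact Commute.inv_inv_iff.mp (h : Commute _ _)

end IsGeneralizedDihedral

open Classical in
/-- Writing `p = n * t ^ i` with `n ∈ N`, this is `(n * t ^ i, b) ↦ (n * t ^ b, i)`. -/
noncomputable def dihedralSwap (N : Subgroup G) (t : G) : G × Bool → G × Bool
  | (p, false) => if p ∈ N then (p, false) else (p * t, true)
  | (p, true) => if p ∈ N then (p * t, false) else (p, true)

theorem isLoopHom_dihedralSwap {N : Subgroup G} (hN : IsGeneralizedDihedral N) {t : G}
    (ht : t ∉ N) : IsLoopHom (dihedralSwap N t) := by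
  have mem : ∀ {a b : G}, a ∉ N → b ∉ N → a * b ∈ N := fun ha hb => by
    simp [hN.mul_mem_iff, ha, hb]
  have swap := @hN.mul_eq_inv_mul
  have inv := @hN.inv_eq_self
  rintro ⟨p, _ | _⟩ ⟨q, _ | _⟩ <;> by_cases hp : p ∈ N <;> by_cases hq : q ∈ N <;>
    simp only [dihedralSwap, cmul, hN.mul_mem_iff, hp, hq, inv_mem_iff, iff_true, iff_false,
      not_true, if_true, if_false, mul_inv_rev, Prod.mk.injEq, and_true]
  · rw [mul_assoc, (hN.commute hp (mem hq ht)).eq]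
  · rw [mul_assoc p t, swap ht (inv_mem hq), inv_inv, mul_assoc]
  · rw [inv ht, inv hq, ← mul_assoc, mul_assoc t q p, swap ht (mem hq hp), mul_assoc,
      hN.mul_self_eq_one t ht, mul_one, mul_inv_rev, inv hp, inv hq]
  · rw [← mul_assoc, (hN.commute hq hp).eq]
  · rw [mul_assoc, mul_inv_cancel_left, swap hp (inv_mem hq), inv_inv]
  · rw [inv hq, mul_assoc]
  · rw [mul_assoc, mul_assoc, swap ht hq]
  · rw [mul_assoc, ← mul_assoc t, swap ht hp, ← mul_assoc, ← mul_assoc, swap hq (inv_mem hp),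
      inv_inv, mul_assoc, hN.mul_self_eq_one t ht, mul_one, inv hq]
  · rw [inv ht, inv hq, mul_assoc t, swap ht (mem hq hp), mul_inv_rev, inv hp, inv hq]
  · rw [mul_assoc, ← mul_assoc t, swap ht hq, mul_assoc, hN.mul_self_eq_one t ht, mul_one,
      (hN.commute (inv_mem hq) hp).eq]
  · rw [inv hq, mul_assoc]
  · rw [inv ht, ← mul_assoc, mul_assoc q⁻¹, (hN.commute (inv_mem hq) (mem hp ht)).eq]

theorem involutive_dihedralSwap {N : Subgroup G} (hN : IsGeneralizedDihedral N) {t : G}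
    (ht : t ∉ N) : Involutive (dihedralSwap N t) := by
  rintro ⟨p, _ | _⟩ <;> by_cases hp : p ∈ N <;>
    simp [dihedralSwap, hN.mul_mem_iff, hp, ht, mul_assoc, hN.mul_self_eq_one t ht]

namespace IsHalfAut

variable {f : G × Bool → G × Bool} (hf : IsHalfAut f)
include hf

theorem snd_map_cmul (x y : G × Bool) : (f (cmul x y)).2 = xor (f x).2 (f y).2 := by
  rcases hf.2 x y with h | h <;> rw [h, snd_cmul]
  exact Bool.xor_comm _ _

theorem map_cmul_self (x : G × Bool) : f (cmul x x) = cmul (f x) (f x) :=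
  (hf.2 x x).elim id id

theorem map_one : f (1, false) = (1, false) := by
  have h := hf.map_cmul_self (1, false)
  simp only [cmul, mul_one] at h
  rcases hx : f (1, false) with ⟨a, _ | _⟩ <;> rw [hx] at h <;> simp at h
  simpa using h

theorem mul_self_eq_one {g : G} (hg : (f (g, false)).2 = true) : g * g = 1 := by
  have h := hf.map_cmul_self (g, false)
  rw [show f (g, false) = ((f (g, false)).1, true) from Prod.ext rfl hg] at h
  simp only [cmul, inv_mul_cancel] at h
  rw [← hf.map_one] at h
  exact congrArg Prod.fst (hf.1.1 h)

theorem snd_map_true (g : G) : (f (g, true)).2 = xor (f (g, false)).2 (f (1, true)).2 := by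
  rw [← hf.snd_map_cmul]; simp [cmul]

def evenSubgroup : Subgroup G where
  carrier := {g | (f (g, false)).2 = false}
  mul_mem' {a b} (ha : (f (a, false)).2 = false) (hb : (f (b, false)).2 = false) := by
    show (f (a * b, false)).2 = false
    rw [← show cmul (a, false) (b, false) = (a * b, false) from rfl, hf.snd_map_cmul, ha, hb]
    rfl
  one_mem' := by simp [hf.map_one]
  inv_mem' {a} (ha : (f (a, false)).2 = false) := by
    have h := hf.snd_map_cmul (a, false) (a⁻¹, false)
    show (f (a⁻¹, false)).2 = false
    simpa [cmul, hf.map_one, ha] using h.symm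

theorem mem_evenSubgroup {g : G} : g ∈ hf.evenSubgroup ↔ (f (g, false)).2 = false := Iff.rfl

theorem isGeneralizedDihedral {t : G} (ht : t ∉ hf.evenSubgroup) :
    IsGeneralizedDihedral hf.evenSubgroup := by
  refine ⟨Subgroup.index_eq_two_iff_exists_notMem_and.mpr ⟨t, ht, fun b => ?_⟩, fun g hg => ?_⟩
  · simp only [mem_evenSubgroup, Bool.not_eq_false] at ht ⊢
    rw [← show cmul (b, false) (t, false) = (b * t, false) from rfl, hf.snd_map_cmul, ht]
    cases (f (b, false)).2 <;> simp
  · exact hf.mul_self_eq_one (by simpa [mem_evenSubgroup] using hg)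

theorem snd_map_true_of_forall (hbase : ∀ g, (f (g, false)).2 = false) (g : G) :
    (f (g, true)).2 = true := by
  obtain ⟨⟨h, _ | _⟩, hx⟩ := hf.1.2 (1, true)
  · simpa [hx] using hbase h
  · have := hf.snd_map_true h
    rw [hx, hbase] at this
    rw [hf.snd_map_true, hbase, ← this]

theorem isTwist (hfix : ∀ g, f (g, false) = (g, false)) (h₁ : f (1, true) = (1, true)) :
    IsTwist fun g => (f (g, true)).1 := by
  have hD : ∀ g, f (g, true) = ((f (g, true)).1, true) := fun g =>
    Prod.ext rfl (hf.snd_map_true_of_forall (by simp [hfix]) g)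
  refine ⟨fun x y h => ?_, by rw [h₁], fun y x => ?_, fun y x => ?_⟩
  · exact congrArg Prod.fst (hf.1.1 ((hD x).trans (h ▸ hD y).symm))
  · have h := hf.2 (x, false) (y, true)
    rw [hfix, hD y] at h
    exact h.imp (congrArg Prod.fst) (congrArg Prod.fst)
  · have h := hf.2 (x, true) (y, true)
    rw [hD x, hD y, show cmul (x, true) (y, true) = (y⁻¹ * x, false) from rfl, hfix] at h
    exact h.imp (congrArg Prod.fst) (congrArg Prod.fst)

end IsHalfAut

namespace IsNontrivialHalfAut

variable {f : G × Bool → G × Bool}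

theorem exists_snd_map_one_true_eq_false (hf : IsNontrivialHalfAut f) {t : G}
    (ht : (f (t, false)).2 = true) :
    ∃ f' : G × Bool → G × Bool, IsNontrivialHalfAut f' ∧ (f' (t, false)).2 = true ∧
      (f' (1, true)).2 = false := by
  by_cases h₁ : (f (1, true)).2 = false
  · exact ⟨f, hf, ht, h₁⟩
  refine ⟨f ∘ liftAut (MulEquiv.refl G) t,
    hf.comp_of_isLoopHom (isLoopHom_liftAut _ _) (bijective_liftAut _ _), by simpa [liftAut], ?_⟩
  simpa [liftAut, hf.1.snd_map_true t, ht] using h₁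

theorem exists_forall_snd_map_false (hf : IsNontrivialHalfAut f) :
    ∃ f' : G × Bool → G × Bool, IsNontrivialHalfAut f' ∧ ∀ g, (f' (g, false)).2 = false := by
  by_cases hbase : ∀ g, (f (g, false)).2 = false
  · exact ⟨f, hf, hbase⟩
  obtain ⟨t, ht⟩ := not_forall.mp hbase
  obtain ⟨f, hf, ht, h₁⟩ := hf.exists_snd_map_one_true_eq_false (Bool.not_eq_false _ ▸ ht)
  have ht' : t ∉ hf.1.evenSubgroup := by simp [IsHalfAut.mem_evenSubgroup, ht]
  have hN := hf.1.isGeneralizedDihedral ht'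
  refine ⟨f ∘ dihedralSwap hf.1.evenSubgroup t, hf.comp_of_isLoopHom
    (isLoopHom_dihedralSwap hN ht') (involutive_dihedralSwap hN ht').bijective, fun g => ?_⟩
  by_cases hg : g ∈ hf.1.evenSubgroup
  · simp only [comp_apply, dihedralSwap, if_pos hg]
    exact hg
  · have hgt : g * t ∈ hf.1.evenSubgroup := by simp [hN.mul_mem_iff, hg, ht']
    simp only [comp_apply, dihedralSwap, if_neg hg]
    rw [hf.1.snd_map_true, h₁, (hgt : (f (g * t, false)).2 = false)]
    rfl

theorem exists_fixing_of_mulEquiv (hf : IsNontrivialHalfAut f) (α : G ≃* G)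
    (hα : ∀ g, f (g, false) = (α g, false)) :
    ∃ f' : G × Bool → G × Bool, IsNontrivialHalfAut f' ∧ (∀ g, f' (g, false) = (g, false)) ∧
      f' (1, true) = (1, true) := by
  have h₁ := hf.1.snd_map_true_of_forall (fun g => by rw [hα]) 1
  refine ⟨liftAut α.symm (α.symm (f (1, true)).1)⁻¹ ∘ f,
    hf.isLoopHom_comp (isLoopHom_liftAut _ _) (bijective_liftAut _ _),
    fun g => by simp [liftAut, hα], ?_⟩
  rw [comp_apply, show f (1, true) = ((f (1, true)).1, true) from Prod.ext rfl h₁]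
  simp [liftAut]

theorem exists_fixing (hf : IsNontrivialHalfAut f) (hbase : ∀ g, (f (g, false)).2 = false) :
    ∃ f' : G × Bool → G × Bool, IsNontrivialHalfAut f' ∧ (∀ g, f' (g, false) = (g, false)) ∧
      f' (1, true) = (1, true) := by
  set θ : G → G := fun g => (f (g, false)).1
  have hθf : ∀ g, f (g, false) = (θ g, false) := fun g => Prod.ext rfl (hbase g)
  have hθ : IsHalfHom θ := fun x y => by
    simpa [hθf, cmul] using hf.1.2 (x, false) (y, false)
  have hθb : Bijective θ := by
    refine ⟨fun x y h => ?_, fun z => ?_⟩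
    · exact congrArg Prod.fst (hf.1.1.1 ((hθf x).trans (h ▸ hθf y).symm))
    · obtain ⟨⟨g, _ | _⟩, hg⟩ := hf.1.1.2 (z, false)
      · exact ⟨g, by simp [θ, hg]⟩
      · simpa [hg] using hf.1.snd_map_true_of_forall hbase g
  rcases hθ.map_mul_or_map_mul_rev hθb.1 with hhom | hanti
  · exact hf.exists_fixing_of_mulEquiv (.ofBijective (MonoidHom.mk' θ hhom) hθb) hθf
  · refine (hf.comp_of_isLoopAntiHom isLoopAntiHom_loopInv involutive_loopInv.bijective)
      |>.exists_fixing_of_mulEquiv (MulEquiv.ofBijective (MonoidHom.mk' (fun g => θ g⁻¹)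
        fun g h => by simp [hanti]) (hθb.comp inv_involutive.bijective)) fun g => hθf g⁻¹

theorem exists_ne (hf : IsNontrivialHalfAut f) (hfix : ∀ g, f (g, false) = (g, false)) :
    ∃ w, (f (w, true)).1 ≠ w := by
  by_contra! h
  have hid : f = id := funext fun
    | (g, false) => hfix g
    | (g, true) => Prod.ext (h g) (hf.1.snd_map_true_of_forall (by simp [hfix]) g)
  exact hf.2.1 fun x y => by rw [hid]; rfl

end IsNontrivialHalfAut

end

theorem exists_order_four_indecomposable_general {G : Type*} [Group G]
    (hnab : ∃ a b : G, a * b ≠ b * a)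
    (hhalf : ∃ f : G × Bool → G × Bool, IsHalfAut f ∧
      (¬ ∀ x y : G × Bool, f (cmul x y) = cmul (f x) (f y)) ∧
      (¬ ∀ x y : G × Bool, f (cmul x y) = cmul (f y) (f x))) :
    ∃ y : G, orderOf y = 4 ∧
      ∀ g h : G, y = g * h → orderOf g = 4 ∨ orderOf h = 4 := by
  obtain ⟨f, hf⟩ := hhalf
  obtain ⟨f, hf, hbase⟩ := IsNontrivialHalfAut.exists_forall_snd_map_false hf
  obtain ⟨f, hf, hfix, h₁⟩ := hf.exists_fixing hbase
  have hD := hf.1.isTwist hfix h₁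
  obtain ⟨w, hw⟩ := hf.exists_ne hfix
  exact ⟨w, hD.orderOf_eq_four_of_ne hnab hw,
    fun _ _ => hD.orderOf_eq_four_of_ne_of_eq_mul hnab hw⟩

/-- If a finite nonabelian group `G` is such that `M(G,2)` has a nontrivial
half-automorphism, then `G` has an element `y` of order `4` such that whenever
`y = gh`, one of `g`, `h` has order `4`. -/
theorem exists_order_four_indecomposable {G : Type*} [Group G] [Finite G]
    (hnab : ∃ a b : G, a * b ≠ b * a)
    (hhalf : ∃ f : G × Bool → G × Bool, IsHalfAut f ∧
      (¬ ∀ x y : G × Bool, f (cmul x y) = cmul (f x) (f y)) ∧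
      (¬ ∀ x y : G × Bool, f (cmul x y) = cmul (f y) (f x))) :
    ∃ y : G, orderOf y = 4 ∧
      ∀ g h : G, y = g * h → orderOf g = 4 ∨ orderOf h = 4 :=
  exists_order_four_indecomposable_general hnab hhalf
end

section
/- Let G be a nonabelian group, L = M(G,2), H the group of half-automorphisms of L fixing G pointwise and fixing u, and for t ∈ G let d_t be the automorphism d_t(g,0)=(g,0), d_t(g,1)=(tg,1). For each z in the center of G, the map d_z commutes with every element of H and with every d_t; i.e., Z = {d_z : z ∈ Z(G)} is contained in the center of the group DH generated by D = {d_t : t∈G} and H. -/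
section Aux

variable {G : Type*} [Group G]

/-- Elements of `H` map the `u`-coset to itself. -/
lemma snd_true_of_H {f : G × Bool → G × Bool}
    (hinj : Function.Injective f)
    (hfix : ∀ g : G, f (g, false) = (g, false)) (x : G) :
    f (x, true) = ((f (x, true)).1, true) := by
  rcases hb : f (x, true) with ⟨y, b⟩
  cases b
  · exact absurd (hinj (hb.trans (hfix y).symm)) (by simp)
  · simp [hb]

/-- Key lemma: elements of `H` commute with `dMap z` on the `u`-coset. -/
lemma key_comm {f : G × Bool → G × Bool}
    (hnab : ∃ a b : G, a * b ≠ b * a)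
    (hbij : Function.Bijective f)
    (hm : ∀ x y, f (cmul x y) = cmul (f x) (f y) ∨ f (cmul x y) = cmul (f y) (f x))
    (hfix : ∀ g : G, f (g, false) = (g, false))
    (hu : f ((1 : G), true) = ((1 : G), true))
    {z : G} (hz : ∀ g : G, g * z = z * g) (g : G) :
    f (z * g, true) = (z * (f (g, true)).1, true) := by
  have hsnd : ∀ x : G, ∃ y : G, f (x, true) = (y, true) :=
    fun x => ⟨(f (x, true)).1, snd_true_of_H hbij.1 hfix x⟩
  choose c hc using hsnd
  have hB : ∀ x y : G, y⁻¹ * x = (c y)⁻¹ * c x ∨ y⁻¹ * x = (c x)⁻¹ * c y := by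
    intro x y
    have h1 := hm (x, true) (y, true)
    rw [show cmul ((x : G), true) ((y : G), true) = (y⁻¹ * x, false) from rfl,
      hfix, hc x, hc y,
      show cmul ((c x : G), true) ((c y : G), true) = ((c y)⁻¹ * c x, false) from rfl,
      show cmul ((c y : G), true) ((c x : G), true) = ((c x)⁻¹ * c y, false) from rfl] at h1
    rcases h1 with h1 | h1
    · exact Or.inl (congrArg Prod.fst h1)
    · exact Or.inr (congrArg Prod.fst h1)
  have hC : ∀ x t : G, c (x * t⁻¹) = c x * t⁻¹ ∨ c (x * t⁻¹) = c x * t := by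
    intro x t
    have h1 := hm (x, true) (t, false)
    rw [show cmul ((x : G), true) ((t : G), false) = (x * t⁻¹, true) from rfl,
      hc (x * t⁻¹), hc x, hfix t,
      show cmul ((c x : G), true) ((t : G), false) = (c x * t⁻¹, true) from rfl,
      show cmul ((t : G), false) ((c x : G), true) = (c x * t, true) from rfl] at h1
    rcases h1 with h1 | h1
    · exact Or.inl (congrArg Prod.fst h1)
    · exact Or.inr (congrArg Prod.fst h1)
  have c1 : c 1 = 1 := congrArg Prod.fst ((hc 1).symm.trans hu)
  have hcg : ∀ x : G, c x = x ∨ c x = x⁻¹ := by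
    intro x
    rcases hB x 1 with h1 | h1
    · left; rw [c1] at h1; simpa using h1.symm
    · right
      rw [c1] at h1
      have hx : x = (c x)⁻¹ := by simpa using h1
      have hx2 := congrArg Inv.inv hx
      rw [inv_inv] at hx2
      exact hx2.symm
  have hz' : ∀ x : G, x * z⁻¹ = z⁻¹ * x := by
    intro x
    calc x * z⁻¹ = (z * x⁻¹)⁻¹ := by group
      _ = (x⁻¹ * z)⁻¹ := by rw [hz x⁻¹]
      _ = z⁻¹ * x := by group
  have main : c (z * g) = z * c g := by
    by_contra h0
    -- Step 2 : c (z*g) = c g * z⁻¹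
    have hA : c (z * g) = c g * z⁻¹ := by
      have hval : g⁻¹ * (z * g) = z := by rw [← hz g]; group
      rcases hB (z * g) g with h1 | h1
      · exfalso
        rw [hval] at h1
        apply h0
        have h2 : c g * z = c (z * g) := by
          calc c g * z = c g * ((c g)⁻¹ * c (z * g)) := by rw [← h1]
            _ = c (z * g) := by group
        rw [← h2]
        exact hz (c g)
      · rw [hval] at h1
        have h2 : c (z * g) * z = c g := by
          calc c (z * g) * z = c (z * g) * ((c (z * g))⁻¹ * c g) := by rw [← h1]
            _ = c g := by group
        calc c (z * g) = (c (z * g) * z) * z⁻¹ := by group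
          _ = c g * z⁻¹ := by rw [h2]
    have hzz : z ≠ z⁻¹ := by
      intro h
      exact h0 (by rw [hA, ← h, hz])
    -- Step 3 : c g = g⁻¹
    have hcg3 : c g = g⁻¹ := by
      rcases hcg g with h1 | h1
      · rcases hcg (z * g) with h2 | h2
        · exfalso
          apply hzz
          have h3 : z * g = g * z⁻¹ := by rw [← h2, hA, h1]
          rw [← hz g] at h3
          exact mul_left_cancel h3
        · have hgg : g = g⁻¹ := by
            have e1 : g * z⁻¹ = g⁻¹ * z⁻¹ := by
              calc g * z⁻¹ = c g * z⁻¹ := by rw [h1]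
                _ = c (z * g) := hA.symm
                _ = (z * g)⁻¹ := h2
                _ = g⁻¹ * z⁻¹ := by group
            exact mul_right_cancel e1
          rw [h1]; exact hgg
      · exact h1
    have hAzg : c (z * g) = g⁻¹ * z⁻¹ := by
      rw [hA, hcg3]
    -- Step 4 : c z = z⁻¹
    have hcz : c z = z⁻¹ := by
      rcases hcg z with h2 | h2
      · exfalso
        have hval : (z * g)⁻¹ * z = g⁻¹ := by group
        have hzsq : z * z = g⁻¹ * g⁻¹ := by
          rcases hB z (z * g) with h4 | h4
          · rw [hval, hAzg, h2] at h4
            have e : g⁻¹ = g * (z * z) := by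
              calc g⁻¹ = (g⁻¹ * z⁻¹)⁻¹ * z := h4
                _ = (z * g) * z := by group
                _ = (g * z) * z := by rw [← hz g]
                _ = g * (z * z) := by group
            calc z * z = g⁻¹ * (g * (z * z)) := by group
              _ = g⁻¹ * g⁻¹ := by rw [← e]
          · exfalso
            rw [hval, hAzg, h2] at h4
            -- h4 : g⁻¹ = z⁻¹ * (g⁻¹ * z⁻¹)
            apply hzz
            have e : g⁻¹ = (z⁻¹ * z⁻¹) * g⁻¹ := by
              calc g⁻¹ = z⁻¹ * (g⁻¹ * z⁻¹) := h4
                _ = z⁻¹ * (z⁻¹ * g⁻¹) := by rw [hz' g⁻¹]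
                _ = (z⁻¹ * z⁻¹) * g⁻¹ := by group
            have e2 : z⁻¹ * z⁻¹ = 1 := by
              have := mul_right_cancel (e.symm.trans (one_mul g⁻¹).symm)
              exact this
            calc z = z * (z⁻¹ * z⁻¹) := by rw [e2, mul_one]
              _ = z⁻¹ := by group
        rcases hB z g with h4 | h4
        · -- h4 : g⁻¹ * z = (c g)⁻¹ * c z = g * z
          rw [h2, hcg3, inv_inv] at h4
          apply hzz
          have hg : g⁻¹ = g := mul_right_cancel h4
          have e2 : z * z = 1 := by
            calc z * z = g⁻¹ * g⁻¹ := hzsq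
              _ = g⁻¹ * g := by rw [hg]
              _ = 1 := by group
          calc z = z * (z * z⁻¹) := by group
            _ = (z * z) * z⁻¹ := by group
            _ = z⁻¹ := by rw [e2, one_mul]
        · -- h4 : g⁻¹ * z = (c z)⁻¹ * c g = z⁻¹ * g⁻¹
          rw [h2, hcg3] at h4
          apply hzz
          have e1 : g⁻¹ * z = g⁻¹ * z⁻¹ := by
            calc g⁻¹ * z = z⁻¹ * g⁻¹ := h4
              _ = g⁻¹ * z⁻¹ := (hz' g⁻¹).symm
          exact mul_left_cancel e1
      · exact h2
    -- Step 5 : everything is inverted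
    have hinv : ∀ x : G, c x = x⁻¹ := by
      intro x
      rcases hcg x with h3 | h3
      · rcases hB z x with h4 | h4
        · -- h4 : x⁻¹ * z = x⁻¹ * z⁻¹
          rw [h3, hcz] at h4
          exact absurd (mul_left_cancel h4) hzz
        · -- h4 : x⁻¹ * z = z⁻¹⁻¹ * x
          rw [h3, hcz, inv_inv] at h4
          have e : x⁻¹ = x := by
            have e1 : x⁻¹ * z = x * z := by
              calc x⁻¹ * z = z * x := h4
                _ = x * z := (hz x).symm
            exact mul_right_cancel e1
          rw [h3]; exact e.symm
      · exact h3
    -- Step 6 : conjugation inverts or fixes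
    have hconj : ∀ x t : G, t * x⁻¹ = x⁻¹ * t⁻¹ ∨ t * x⁻¹ = x⁻¹ * t := by
      intro x t
      have h1 := hC x t
      rw [hinv (x * t⁻¹), hinv x] at h1
      have e : (x * t⁻¹)⁻¹ = t * x⁻¹ := by group
      rw [e] at h1
      exact h1
    -- Step 7 : contradiction with nonabelianness
    obtain ⟨a, b, hab⟩ := hnab
    have comm_of : a * b⁻¹ = b⁻¹ * a → False := by
      intro h
      apply hab
      calc a * b = b * (b⁻¹ * a) * b := by group
        _ = b * (a * b⁻¹) * b := by rw [← h]
        _ = b * a := by group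
    have hba : a * b⁻¹ = b⁻¹ * a⁻¹ := by
      rcases hconj b a with h1 | h1
      · exact h1
      · exact absurd h1 comm_of
    rcases hconj b (z * a) with h2 | h2
    · apply hzz
      have e1 : z * (b⁻¹ * a⁻¹) = z⁻¹ * (b⁻¹ * a⁻¹) := by
        calc z * (b⁻¹ * a⁻¹) = z * (a * b⁻¹) := by rw [hba]
          _ = (z * a) * b⁻¹ := by group
          _ = b⁻¹ * (z * a)⁻¹ := h2
          _ = (b⁻¹ * a⁻¹) * z⁻¹ := by group
          _ = z⁻¹ * (b⁻¹ * a⁻¹) := hz' _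
      exact mul_right_cancel e1
    · apply comm_of
      have e1 : z * (a * b⁻¹) = z * (b⁻¹ * a) := by
        calc z * (a * b⁻¹) = (z * a) * b⁻¹ := by group
          _ = b⁻¹ * (z * a) := h2
          _ = (b⁻¹ * z) * a := by group
          _ = (z * b⁻¹) * a := by rw [hz b⁻¹]
          _ = z * (b⁻¹ * a) := by group
      exact mul_left_cancel e1
  rw [hc (z * g), hc g, main]

end Aux

/-- For `z` in the center of `G`, the automorphism `d_z` commutes with every
element of the group `DH` generated by `D = {d_t : t ∈ G}` and
`H = {half-automorphisms fixing G pointwise and fixing u}`; that is,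
`Z = {d_z : z ∈ Z(G)}` lies in the center of `DH`. -/
theorem Z_central_in_DH {G : Type*} [Group G] [Finite G]
    (hnab : ∃ a b : G, a * b ≠ b * a)
    (hhalf : ∃ f : G × Bool → G × Bool, IsHalfAut f ∧
      (¬ ∀ x y : G × Bool, f (cmul x y) = cmul (f x) (f y)) ∧
      (¬ ∀ x y : G × Bool, f (cmul x y) = cmul (f y) (f x))) :
    ∀ z ∈ Subgroup.center G,
      ∀ f ∈ Submonoid.closure
          (({f : Function.End (G × Bool) | ∃ t : G, f = dMap t} ∪
            {f : Function.End (G × Bool) | IsHalfAut f ∧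
              (∀ g : G, f (g, false) = (g, false)) ∧
              f ((1 : G), true) = ((1 : G), true)})),
        (show Function.End (G × Bool) from dMap z) * f =
          f * (show Function.End (G × Bool) from dMap z) := by
  intro z hzc f hf
  have hz : ∀ g : G, g * z = z * g := fun g => Subgroup.mem_center_iff.mp hzc g
  induction hf using Submonoid.closure_induction with
  | mem x hx =>
    rcases hx with ⟨t, rfl⟩ | ⟨⟨hbij, hm⟩, hfix, hu⟩
    · refine funext fun w => ?_
      obtain ⟨g, b⟩ := w
      cases b
      · rfl
      · show ((z * (t * g) : G), true) = ((t * (z * g) : G), true)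
        rw [← mul_assoc, ← mul_assoc, hz t]
    · refine funext fun w => ?_
      obtain ⟨g, b⟩ := w
      cases b
      · show dMap z (x ((g : G), false)) = x (dMap z ((g : G), false))
        rw [show dMap z ((g : G), false) = ((g : G), false) from rfl, hfix g]
        rfl
      · show dMap z (x ((g : G), true)) = x (dMap z ((g : G), true))
        calc dMap z (x (g, true))
            = dMap z ((x (g, true)).1, true) := by
              rw [← snd_true_of_H hbij.1 hfix g]
          _ = (z * (x (g, true)).1, true) := rfl
          _ = x (z * g, true) := (key_comm hnab hbij hm hfix hu hz g).symm
          _ = x (dMap z (g, true)) := rfl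
  | one => rw [mul_one, one_mul]
  | mul a b _ _ ha hb => rw [← mul_assoc, ha, mul_assoc, hb, ← mul_assoc]
end
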